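/- arXiv:1902.06484 — 8 statements merged into one kernel-verified Lean document; each statement's English description precedes it below -/
import Mathlib

section
/- Let k, g be natural numbers, let T be a tree with vertex weights c : V(T) → ℕ taking positive values, and let V_1 denote the set of vertices of T of weight 1. Let S be a subtree of T with c(S) > k, let l be a leaf of S with c(S − l) < k − g + 1, let M be a subset of V(S) \ {l}, and let n be a vertex of S not in M ∪ {l} such that S − M is again a tree, n is a leaf of S − M, c(S − M) > k, and c(S − M − n) < k − g + 1. Then |M ∩ V_1| ≤ c(S) − (k + 1) ≤ c(l) − g − 1. -/
/-- Observation 1: bounds from an overload-discharge quadruple `(S, l, M, n)`.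
`S` is a subtree (nonempty connected induced subgraph) of the tree `T`,
`l` a leaf of `S` (at most one neighbour inside `S`), `M ⊆ V(S) - l`,
`n ∈ S - M - l`, `S - M` connected with `n` a leaf of it,
`c(S) > k`, `c(S - l) < k - g + 1`, `c(S - M) > k`, `c(S - M - n) < k - g + 1`.
Then `|M ∩ V₁| ≤ c(S) - (k + 1) ≤ c(l) - g - 1`. -/
theorem overload_discharge_observation
    {V : Type*} [Fintype V] [DecidableEq V]
    (T : SimpleGraph V) (hT : T.IsTree)
    (c : V → ℕ) (hpos : ∀ v, 1 ≤ c v)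
    (k g : ℕ)
    (S : Finset V) (hSconn : (T.induce (S : Set V)).Connected)
    (l : V) (hl : l ∈ S)
    (hleaf : ∀ w₁ w₂, w₁ ∈ S → w₂ ∈ S → T.Adj l w₁ → T.Adj l w₂ → w₁ = w₂)
    (hSk : (k : ℤ) < ∑ v ∈ S, (c v : ℤ))
    (hSl : ∑ v ∈ S.erase l, (c v : ℤ) < (k : ℤ) - (g : ℤ) + 1)
    (M : Finset V) (hM : M ⊆ S.erase l)
    (n : V) (hn : n ∈ S) (hnM : n ∉ M) (hnl : n ≠ l)
    (hSMconn : (T.induce ((S \ M : Finset V) : Set V)).Connected)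
    (hnleaf : ∀ w₁ w₂, w₁ ∈ S \ M → w₂ ∈ S \ M → T.Adj n w₁ → T.Adj n w₂ → w₁ = w₂)
    (hSMk : (k : ℤ) < ∑ v ∈ S \ M, (c v : ℤ))
    (hSMn : ∑ v ∈ (S \ M).erase n, (c v : ℤ) < (k : ℤ) - (g : ℤ) + 1) :
    ((M.filter (fun v => c v = 1)).card : ℤ) ≤ (∑ v ∈ S, (c v : ℤ)) - ((k : ℤ) + 1) ∧
      (∑ v ∈ S, (c v : ℤ)) - ((k : ℤ) + 1) ≤ (c l : ℤ) - (g : ℤ) - 1 := by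
  have hMS : M ⊆ S := hM.trans (Finset.erase_subset _ _)
  have hsplit : ∑ v ∈ S \ M, (c v : ℤ) + ∑ v ∈ M, (c v : ℤ) = ∑ v ∈ S, (c v : ℤ) :=
    Finset.sum_sdiff hMS
  have hcard : ((M.filter (fun v => c v = 1)).card : ℤ) ≤ ∑ v ∈ M, (c v : ℤ) := by
    calc ((M.filter (fun v => c v = 1)).card : ℤ) ≤ (M.card : ℤ) := by
          exact_mod_cast Finset.card_le_card (Finset.filter_subset _ _)
      _ ≤ ∑ v ∈ M, (c v : ℤ) := by
          rw [Finset.card_eq_sum_ones]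
          push_cast
          exact Finset.sum_le_sum fun v _ => by exact_mod_cast hpos v
  have hSeq : ∑ v ∈ S.erase l, (c v : ℤ) + (c l : ℤ) = ∑ v ∈ S, (c v : ℤ) :=
    Finset.sum_erase_add _ _ hl
  constructor
  · linarith
  · linarith
end

section
/- Let T be a tree with vertex weights c : V(T) → ℕ taking positive values, let a ∈ V(T) be a fixed root, and let k be a natural number. For a vertex v, let D(v) denote the set of all vertices w such that v lies on the unique path in T from a to w, and call w a child of v if w is adjacent to v and w ∈ D(v). Suppose v_1, …, v_t are pairwise distinct vertices such that, for each i, Σ_{u ∈ D(v_i)} c(u) > k and Σ_{u ∈ D(w)} c(u) ≤ k for every child w of v_i. Then the sets D(v_1), …, D(v_t) are pairwise disjoint, and consequently c(T) ≥ t·(k + 1). -/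
/-- Distinct support vertices have pairwise disjoint descendant sets, and hence
the total weight is at least `t * (k + 1)`. Here `D v` is the set of vertices
`w` such that `v` lies on the (unique) path from the root `a` to `w`, and a
child of `v` is a neighbour of `v` lying in `D v`. -/
theorem support_vertices_disjoint
    {V : Type*} [Fintype V] [DecidableEq V]
    (T : SimpleGraph V) (hT : T.IsTree)
    (c : V → ℕ) (hpos : ∀ v, 1 ≤ c v)
    (a : V) (k : ℕ)
    (D : V → Finset V)
    (hD : ∀ v w, w ∈ D v ↔ ∀ p : T.Walk a w, p.IsPath → v ∈ p.support)
    (t : ℕ) (v : Fin t → V) (hinj : Function.Injective v)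
    (hsup : ∀ i : Fin t, k < ∑ u ∈ D (v i), c u ∧
      ∀ w : V, T.Adj (v i) w → w ∈ D (v i) → ∑ u ∈ D w, c u ≤ k) :
    (∀ i j : Fin t, i ≠ j → Disjoint (D (v i)) (D (v j))) ∧
      t * (k + 1) ≤ ∑ u, c u := by
  classical
  obtain ⟨P, hP, hPu⟩ : ∃ P : (w : V) → T.Walk a w, (∀ w, (P w).IsPath) ∧
      ∀ w (q : T.Walk a w), q.IsPath → q = P w := by
    choose P h1 h2 using hT.existsUnique_path a
    exact ⟨P, h1, h2⟩
  -- characterization of D in terms of the chosen paths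
  have hD' : ∀ x w, w ∈ D x ↔ x ∈ (P w).support := by
    intro x w
    rw [hD]
    constructor
    · intro h; exact h (P w) (hP w)
    · intro h q hq; rwa [hPu w q hq]
  -- if w is a strict descendant of x, there is a child z of x with D w ⊆ D z
  have hchild : ∀ x w, w ∈ D x → x ≠ w → ∃ z, T.Adj x z ∧ z ∈ D x ∧ D w ⊆ D z := by
    intro x w hw hxw
    have hx : x ∈ (P w).support := (hD' x w).mp hw
    obtain ⟨z, hadj, q, hq⟩ :=
      SimpleGraph.Walk.not_nil_iff.mp (SimpleGraph.Walk.not_nil_of_ne hxw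
        (p := (P w).dropUntil x hx))
    -- the walk a → x → z
    set r : T.Walk a z :=
      ((P w).takeUntil x hx).append (SimpleGraph.Walk.cons hadj SimpleGraph.Walk.nil) with hr
    have hdecomp : P w = r.append q := by
      conv_lhs => rw [← SimpleGraph.Walk.take_spec (P w) hx]
      rw [hq, hr]
      rw [← SimpleGraph.Walk.append_assoc, SimpleGraph.Walk.cons_append,
        SimpleGraph.Walk.nil_append]
    have hrpath : r.IsPath := by
      have := hP w
      rw [hdecomp] at this
      exact this.of_append_left
    have hzP : z ∈ (P w).support := by
      rw [hdecomp, SimpleGraph.Walk.mem_support_append_iff]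
      exact Or.inl r.end_mem_support
    have hxr : x ∈ r.support := by
      rw [hr, SimpleGraph.Walk.mem_support_append_iff]
      exact Or.inl ((P w).takeUntil x hx).end_mem_support
    have hzDx : z ∈ D x := by
      rw [hD' x z, ← hPu z r hrpath]; exact hxr
    refine ⟨z, hadj, hzDx, ?_⟩
    intro u hu
    have hwPu : w ∈ (P u).support := (hD' w u).mp hu
    have htw : (P u).takeUntil w hwPu = P w :=
      hPu w _ ((hP u).takeUntil hwPu)
    rw [hD' z u]
    exact (P u).support_takeUntil_subset hwPu (htw ▸ hzP)
  -- comparability: if D x and D y intersect then one dominates the other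
  have hcomp : ∀ x y, x ≠ y → ∀ u, u ∈ D x → u ∈ D y → y ∈ D x ∨ x ∈ D y := by
    intro x y hxy u hux huy
    have hx : x ∈ (P u).support := (hD' x u).mp hux
    have hy : y ∈ (P u).support := (hD' y u).mp huy
    have hsplit := SimpleGraph.Walk.take_spec (P u) hy
    by_cases hxq : x ∈ ((P u).takeUntil y hy).support
    · left
      have hq : (P u).takeUntil y hy = P y := hPu y _ ((hP u).takeUntil hy)
      rw [hD' x y, ← hq]; exact hxq
    · right
      have hxd : x ∈ ((P u).dropUntil y hy).support := by
        rw [← hsplit, SimpleGraph.Walk.mem_support_append_iff] at hx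
        exact hx.resolve_left hxq
      set r : T.Walk a x :=
        ((P u).takeUntil y hy).append (((P u).dropUntil y hy).takeUntil x hxd) with hr
      have hdecomp : P u = r.append (((P u).dropUntil y hy).dropUntil x hxd) := by
        conv_lhs => rw [← hsplit]
        conv_lhs => rw [← SimpleGraph.Walk.take_spec ((P u).dropUntil y hy) hxd]
        rw [hr, SimpleGraph.Walk.append_assoc]
      have hrpath : r.IsPath := by
        have := hP u
        rw [hdecomp] at this
        exact this.of_append_left
      have hyr : y ∈ r.support := by
        rw [hr, SimpleGraph.Walk.mem_support_append_iff]
        exact Or.inl ((P u).takeUntil y hy).end_mem_support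
      rw [hD' y x, ← hPu x r hrpath]
      exact hyr
  -- no support vertex is a strict descendant of another
  have hkey : ∀ i j : Fin t, v i ≠ v j → v j ∉ D (v i) := by
    intro i j hne hmem
    obtain ⟨z, hadj, hz, hsub⟩ := hchild (v i) (v j) hmem (hne)
    have h1 : ∑ u ∈ D (v j), c u ≤ ∑ u ∈ D z, c u :=
      Finset.sum_le_sum_of_subset hsub
    have h2 : ∑ u ∈ D z, c u ≤ k := (hsup i).2 z hadj hz
    exact absurd ((hsup j).1.trans_le (h1.trans h2)) (lt_irrefl k)
  have hdisj : ∀ i j : Fin t, i ≠ j → Disjoint (D (v i)) (D (v j)) := by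
    intro i j hij
    rw [Finset.disjoint_left]
    intro u hui huj
    have hne : v i ≠ v j := fun h => hij (hinj h)
    rcases hcomp (v i) (v j) hne u hui huj with h | h
    · exact hkey i j hne h
    · exact hkey j i hne.symm h
  refine ⟨hdisj, ?_⟩
  have hsum : ∑ i : Fin t, ∑ u ∈ D (v i), c u =
      ∑ u ∈ Finset.univ.biUnion (fun i : Fin t => D (v i)), c u :=
    (Finset.sum_biUnion (fun i _ j _ hij => hdisj i j hij)).symm
  calc t * (k + 1) = ∑ _i : Fin t, (k + 1) := by simp [mul_comm]
    _ ≤ ∑ i : Fin t, ∑ u ∈ D (v i), c u :=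
        Finset.sum_le_sum (fun i _ => (hsup i).1)
    _ = ∑ u ∈ Finset.univ.biUnion (fun i : Fin t => D (v i)), c u := hsum
    _ ≤ ∑ u, c u := Finset.sum_le_sum_of_subset (Finset.subset_univ _)
end

section
/- Let T be a tree with vertex weights c : V(T) → ℕ taking positive values, and let W := c(T) be the total weight. If 2·c(v) ≤ W for every vertex v of T, then there exists a subtree S of T with W ≤ 3·c(S) and 3·c(S) ≤ 2·W. -/
/-- Mohr-type lemma: a tree with positive vertex weights, total weight `W`,
in which every vertex has weight at most `W / 2`, has a subtree of weight
between `W / 3` and `2W / 3` (stated as `W ≤ 3 c(S) ∧ 3 c(S) ≤ 2 W`). -/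
theorem subtree_weight_middle_third
    {V : Type*} [Fintype V] [DecidableEq V]
    (T : SimpleGraph V) (hT : T.IsTree)
    (c : V → ℕ) (hpos : ∀ v, 1 ≤ c v)
    (hhalf : ∀ v, 2 * c v ≤ ∑ u, c u) :
    ∃ S : Finset V, S.Nonempty ∧ (T.induce (S : Set V)).Connected ∧
      (∑ u, c u) ≤ 3 * (∑ v ∈ S, c v) ∧ 3 * (∑ v ∈ S, c v) ≤ 2 * (∑ u, c u) := by
  classical
  set W := ∑ u, c u with hW
  -- every single vertex has 3 * c v ≤ 2 * W
  have hsing : ∀ v : V, 3 * c v ≤ 2 * W := by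
    intro v
    have := hhalf v
    omega
  -- singletons induce connected subgraphs
  have hsingconn : ∀ v : V, (T.induce ({v} : Set V)).Connected := by
    intro v
    rw [SimpleGraph.connected_iff]
    exact ⟨fun a b => by rw [Subsingleton.elim a b], ⟨⟨v, rfl⟩⟩⟩
  -- the (nonempty) family of connected sets with weight at most 2W/3
  let P : Finset V → Prop := fun S =>
    S.Nonempty ∧ (T.induce (S : Set V)).Connected ∧ 3 * (∑ v ∈ S, c v) ≤ 2 * W
  have hVne : Nonempty V := hT.isConnected.nonempty
  obtain ⟨v0⟩ := hVne
  let F : Finset (Finset V) := Finset.univ.filter P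
  have hv0F : ({v0} : Finset V) ∈ F := by
    refine Finset.mem_filter.mpr ⟨Finset.mem_univ _, ⟨v0, Finset.mem_singleton_self v0⟩, ?_, ?_⟩
    · rw [Finset.coe_singleton]; exact hsingconn v0
    · simpa using hsing v0
  obtain ⟨S, hSF, hSmax⟩ := F.exists_max_image (fun S => S.card) ⟨_, hv0F⟩
  obtain ⟨-, hSne, hSconn, hSle⟩ := Finset.mem_filter.mp hSF
  -- if S already has weight at least W/3, we are done
  by_cases hbig : W ≤ 3 * (∑ v ∈ S, c v)
  · exact ⟨S, hSne, hSconn, hbig, hSle⟩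
  push_neg at hbig
  -- otherwise S is a proper subset: pick a vertex outside
  have hSsub : ∑ v ∈ S, c v ≤ W := Finset.sum_le_sum_of_subset (S.subset_univ)
  have hSposw : 1 ≤ ∑ v ∈ S, c v := by
    obtain ⟨x, hx⟩ := hSne
    calc 1 ≤ c x := hpos x
    _ ≤ ∑ v ∈ S, c v := Finset.single_le_sum (fun i _ => Nat.zero_le _) hx
  have hSneuniv : S ≠ Finset.univ := by
    intro h
    rw [h] at hbig
    omega
  obtain ⟨y, hy⟩ : ∃ y, y ∉ S := by
    by_contra h
    push_neg at h
    exact hSneuniv (Finset.eq_univ_iff_forall.mpr h)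
  obtain ⟨x, hx⟩ := hSne
  -- find a boundary edge
  have cross : ∀ {a b : V} (_ : T.Walk a b), a ∈ S → b ∉ S →
      ∃ u ∈ S, ∃ v, v ∉ S ∧ T.Adj u v := by
    intro a b p
    induction p with
    | nil => intro ha hb; exact absurd ha hb
    | @cons a' m b' h q ih =>
      intro ha hb
      by_cases hm : m ∈ S
      · exact ih hm hb
      · exact ⟨a', ha, m, hm, h⟩
  obtain ⟨u, hu, v, hv, hadj⟩ := (hT.isConnected x y).elim (fun p => cross p hx hy)
  -- S ∪ {v} is connected
  have hset : (↑S : Set V) ∪ {u, v} = ((insert v S : Finset V) : Set V) := by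
    ext z
    simp only [Set.mem_union, Set.mem_insert_iff, Set.mem_singleton_iff,
      Finset.coe_insert, Finset.mem_coe]
    constructor
    · rintro (h | h | h)
      · exact Or.inr h
      · exact Or.inr (h ▸ hu)
      · exact Or.inl h
    · rintro (h | h)
      · exact Or.inr (Or.inr h)
      · exact Or.inl h
  have hconn' : (T.induce ((insert v S : Finset V) : Set V)).Connected := by
    rw [← hset]
    exact SimpleGraph.induce_union_connected hSconn.preconnected
      (SimpleGraph.induce_pair_connected_of_adj hadj).preconnected
      ⟨u, Finset.mem_coe.mpr hu, by simp⟩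
  -- maximality forces the new set to be too heavy
  have hgt : 2 * W < 3 * (∑ w ∈ insert v S, c w) := by
    by_contra h
    push_neg at h
    have hmem : insert v S ∈ F :=
      Finset.mem_filter.mpr ⟨Finset.mem_univ _, ⟨v, Finset.mem_insert_self v S⟩, hconn', h⟩
    have := hSmax _ hmem
    have hcard : (insert v S).card = S.card + 1 := Finset.card_insert_of_notMem hv
    omega
  rw [Finset.sum_insert hv] at hgt
  -- hence v itself is heavy enough: {v} works
  refine ⟨{v}, ⟨v, Finset.mem_singleton_self v⟩, by rw [Finset.coe_singleton]; exact hsingconn v, ?_, by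
    simpa using hsing v⟩
  rw [Finset.sum_singleton]
  omega
end

section
/- Let A be a multiset of N positive integers and let k be a natural number. If Σ A ≤ 2N − 2 and Σ A − N + 1 ≤ k ≤ N, and every element a of A satisfies a ≤ k, then there exists a sub-multiset B of A with Σ B = k. -/
/-- Greedy lemma: for `k ≤ A.sum` there is `B ≤ A` with `B.sum ≤ k`, and either
`B.sum = k` or some remaining element overshoots `k`. -/
lemma greedy_submultiset (A : Multiset ℕ) : ∀ k, k ≤ A.sum →
    ∃ B ≤ A, B.sum ≤ k ∧ (B.sum = k ∨ ∃ a ∈ A - B, k < B.sum + a) := by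
  induction A using Multiset.induction with
  | empty =>
      intro k hk
      simp only [Multiset.sum_zero, Nat.le_zero] at hk
      exact ⟨0, le_refl _, by simp [hk], Or.inl (by simp [hk])⟩
  | cons a s ih =>
      intro k hk
      by_cases hak : a ≤ k
      · have hks : k - a ≤ s.sum := by
          rw [Multiset.sum_cons] at hk; omega
        obtain ⟨B, hB, hBs, hB2⟩ := ih (k - a) hks
        refine ⟨a ::ₘ B, Multiset.cons_le_cons a hB, ?_, ?_⟩
        · rw [Multiset.sum_cons]; omega
        · rcases hB2 with h | ⟨c, hc, hck⟩
          · left; rw [Multiset.sum_cons]; omega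
          · right
            refine ⟨c, ?_, ?_⟩
            · have : (a ::ₘ s) - (a ::ₘ B) = s - B := by
                rw [Multiset.sub_cons, Multiset.erase_cons_head]
              rw [this]; exact hc
            · rw [Multiset.sum_cons]; omega
      · push_neg at hak
        refine ⟨0, Multiset.zero_le _, ?_, Or.inr ⟨a, ?_, ?_⟩⟩
        · simp
        · rw [Multiset.sub_zero]; exact Multiset.mem_cons_self a s
        · simpa using hak

/-- Subset-sum criterion: if a multiset `A` of `N` positive integers satisfies
`Σ A ≤ 2N - 2` and `Σ A - N + 1 ≤ k ≤ N`, and every element of `A` is at most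
`k`, then some sub-multiset of `A` has sum exactly `k`. -/
theorem subsetSum_of_small_total
    (A : Multiset ℕ) (N : ℕ) (hN : Multiset.card A = N)
    (hpos : ∀ a ∈ A, 0 < a) (k : ℕ)
    (hsum : (A.sum : ℤ) ≤ 2 * (N : ℤ) - 2)
    (hk1 : (A.sum : ℤ) - (N : ℤ) + 1 ≤ (k : ℤ)) (hk2 : k ≤ N)
    (hak : ∀ a ∈ A, a ≤ k) :
    ∃ B : Multiset ℕ, B ≤ A ∧ B.sum = k := by
  classical
  have hsumN : A.sum + 2 ≤ 2 * N := by omega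
  set A1 := A.filter (fun a => a = 1) with hA1
  set A2 := A.filter (fun a => ¬ a = 1) with hA2
  have hsplit : A1 + A2 = A := Multiset.filter_add_not _ A
  set t := Multiset.card A1 with ht
  set m := Multiset.card A2 with hm
  have hcard : t + m = N := by
    rw [ht, hm, ← Multiset.card_add, hsplit, hN]
  have hA1rep : A1 = Multiset.replicate t 1 := by
    rw [ht]
    apply Multiset.eq_replicate_card.mpr
    intro b hb
    exact (Multiset.mem_filter.mp hb).2
  have hA1sum : A1.sum = t := by
    rw [hA1rep, Multiset.sum_replicate, smul_eq_mul, mul_one]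
  have hA2big : ∀ b ∈ A2, 2 ≤ b := by
    intro b hb
    have h1 := (Multiset.mem_filter.mp hb).2
    have h2 := hpos b (Multiset.mem_of_mem_filter hb)
    omega
  have hA2sum_ge : 2 * m ≤ A2.sum := by
    have := Multiset.card_nsmul_le_sum hA2big
    simpa [hm, mul_comm] using this
  have hAsum : t + A2.sum = A.sum := by
    rw [← hA1sum, ← Multiset.sum_add, hsplit]
  -- helper to build B from a sub-multiset of A2 plus ones
  have build : ∀ C ≤ A2, C.sum ≤ k → k - C.sum ≤ t →
      ∃ B : Multiset ℕ, B ≤ A ∧ B.sum = k := by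
    intro C hC hCk hCt
    refine ⟨C + Multiset.replicate (k - C.sum) 1, ?_, ?_⟩
    · calc C + Multiset.replicate (k - C.sum) 1
          ≤ A2 + A1 := by
            refine add_le_add hC ?_
            rw [hA1rep]
            exact (Multiset.replicate_le_replicate 1).mpr hCt
        _ = A := by rw [add_comm, hsplit]
    · rw [Multiset.sum_add, Multiset.sum_replicate, smul_eq_mul, mul_one]
      omega
  by_cases hcase : A2.sum ≤ k
  · exact build A2 le_rfl hcase (by omega)
  · push_neg at hcase
    obtain ⟨B, hB, hBk, hB2⟩ := greedy_submultiset A2 k (le_of_lt hcase)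
    rcases hB2 with h | ⟨a, ha, hka⟩
    · exact build B hB hBk (by omega)
    · have haA2 : a ∈ A2 := Multiset.mem_of_le (Multiset.sub_le_self _ _) ha
      have ha2 : 2 ≤ a := hA2big a haA2
      have herase : a ::ₘ A2.erase a = A2 := Multiset.cons_erase haA2
      have herase_sum : a + (A2.erase a).sum = A2.sum := by
        conv_rhs => rw [← herase]
        rw [Multiset.sum_cons]
      have herase_card : Multiset.card (A2.erase a) = m - 1 := by
        rw [hm, Multiset.card_erase_of_mem haA2]; rfl
      have herase_ge : 2 * (m - 1) ≤ (A2.erase a).sum := by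
        have hb : ∀ b ∈ A2.erase a, 2 ≤ b := fun b hb =>
          hA2big b (Multiset.mem_of_mem_erase hb)
        have := Multiset.card_nsmul_le_sum hb
        rw [herase_card] at this
        simpa [mul_comm] using this
      have hm1 : 1 ≤ m := by
        rw [hm]
        exact Multiset.card_pos_iff_exists_mem.mpr ⟨a, haA2⟩
      -- a ≤ t, since A.sum + 2 ≤ 2N and the erased part has sum ≥ 2(m-1)
      have hat : a ≤ t := by omega
      exact build B hB hBk (by omega)
end

section
/- Let A be a multiset of N positive integers such that Σ A is even and N ≥ Σ A / 2 + 1. Then there exists a sub-multiset B of A with Σ B = Σ A / 2 if and only if every element a of A satisfies a ≤ Σ A / 2. -/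
lemma mem_le_sum_nat {B : Multiset ℕ} {a : ℕ} (h : a ∈ B) : a ≤ B.sum := by
  rw [← Multiset.cons_erase h, Multiset.sum_cons]
  exact Nat.le_add_right _ _

lemma len_mul_le_sum (l : List ℕ) (b : ℕ) (h : ∀ x ∈ l, b ≤ x) :
    l.length * b ≤ l.sum := by
  induction l with
  | nil => simp
  | cons a l ih =>
    simp only [List.length_cons, List.sum_cons]
    have h1 := h a (by simp)
    have h2 := ih (fun x hx => h x (by simp [hx]))
    calc (l.length + 1) * b = l.length * b + b := by ring
    _ ≤ l.sum + a := by omega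
    _ = a + l.sum := by omega

lemma complete_subset_sum : ∀ (l : List ℕ) (t : ℕ),
    (∀ (a : ℕ) (l₁ l₂ : List ℕ), l = l₁ ++ a :: l₂ → a ≤ 1 + l₂.sum) →
    t ≤ l.sum → ∃ B : Multiset ℕ, B ≤ (l : Multiset ℕ) ∧ B.sum = t := by
  intro l
  induction l with
  | nil =>
    intro t _ ht
    simp at ht
    exact ⟨0, le_refl _, by simp [ht]⟩
  | cons a l ih =>
    intro t hcond ht
    simp only [List.sum_cons] at ht
    have hcond' : ∀ (b : ℕ) (l₁ l₂ : List ℕ), l = l₁ ++ b :: l₂ → b ≤ 1 + l₂.sum :=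
      fun b l₁ l₂ h => hcond b (a :: l₁) l₂ (by simp [h])
    by_cases hta : a ≤ t
    · obtain ⟨B, hB, hBs⟩ := ih (t - a) hcond' (by omega)
      refine ⟨a ::ₘ B, ?_, ?_⟩
      · rw [← Multiset.cons_coe]
        exact Multiset.cons_le_cons a hB
      · rw [Multiset.sum_cons, hBs]; omega
    · have h0 := hcond a [] l rfl
      obtain ⟨B, hB, hBs⟩ := ih t hcond' (by omega)
      refine ⟨B, le_trans hB ?_, hBs⟩
      rw [← Multiset.cons_coe]
      exact Multiset.le_cons_self _ _

/-- Partition criterion: for a multiset `A` of `N` positive integers with even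
sum and `N ≥ Σ A / 2 + 1`, a sub-multiset of sum `Σ A / 2` exists iff every
element of `A` is at most `Σ A / 2`. -/
theorem partition_criterion
    (A : Multiset ℕ) (N : ℕ) (hN : Multiset.card A = N)
    (hpos : ∀ a ∈ A, 0 < a)
    (heven : Even A.sum)
    (hbig : A.sum / 2 + 1 ≤ N) :
    (∃ B : Multiset ℕ, B ≤ A ∧ B.sum = A.sum / 2) ↔ ∀ a ∈ A, a ≤ A.sum / 2 := by
  set s := A.sum / 2 with hs
  have h2s : 2 * s = A.sum := Nat.mul_div_cancel' heven.two_dvd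
  constructor
  · rintro ⟨B, hBA, hBs⟩ a ha
    have hsub : A - B + B = A := tsub_add_cancel_of_le hBA
    have hsum : (A - B).sum + B.sum = A.sum := by rw [← Multiset.sum_add, hsub]
    have ha' : a ∈ A - B + B := by rw [hsub]; exact ha
    rcases Multiset.mem_add.mp ha' with h | h
    · have := mem_le_sum_nat h; omega
    · have := mem_le_sum_nat h; omega
  · intro hle
    set l := A.sort (· ≥ ·) with hl
    have hsorted : l.Pairwise (· ≥ ·) := A.pairwise_sort _
    have hcoe : (l : Multiset ℕ) = A := A.sort_eq _
    have hlsum : l.sum = A.sum := by rw [← Multiset.sum_coe, hcoe]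
    have hllen : l.length = N := by rw [← Multiset.coe_card, hcoe, hN]
    have hcond : ∀ (a : ℕ) (l₁ l₂ : List ℕ), l = l₁ ++ a :: l₂ → a ≤ 1 + l₂.sum := by
      intro a l₁ l₂ heq
      rw [heq] at hsorted
      have hge : ∀ x ∈ l₁, a ≤ x := by
        intro x hx
        exact (List.pairwise_append.mp hsorted).2.2 x hx a (by simp)
      have h1 : l₁.length * a ≤ l₁.sum := len_mul_le_sum l₁ a hge
      have h2 : l₂.length * 1 ≤ l₂.sum := by
        apply len_mul_le_sum
        intro x hx
        have : x ∈ A := by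
          rw [← hcoe, heq]
          simp [hx]
        exact hpos x this
      have h3 : l₁.sum + a + l₂.sum = A.sum := by
        rw [← hlsum, heq]; simp; ring
      have h4 : l₁.length + 1 + l₂.length = N := by
        rw [← hllen, heq]; simp; omega
      -- derive a ≤ 1 + l₂.sum
      by_contra hcon
      push_neg at hcon
      have hTs : l₂.sum + l₁.length ≥ s := by omega
      have h5 : l₁.length * (l₂.sum + 2) ≤ l₁.length * a :=
        Nat.mul_le_mul_left _ (by omega)
      have h6 : l₁.length * (l₂.sum + 2) = l₁.length * l₂.sum + 2 * l₁.length := by ring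
      nlinarith [h1, h3, h2s, hTs, hcon]
    obtain ⟨B, hB, hBs⟩ := complete_subset_sum l s hcond (by omega)
    rw [hcoe] at hB
    exact ⟨B, hB, hBs⟩
end

section
/- Let p > 1 be an integer and let T be the star on 2p vertices: one center vertex adjacent to 2p − 1 leaves, with no other edges. Assign vertex weights c by c(center) = 1 and c(v) = 2 for every leaf v. Then T has no subtree of weight exactly 2p. (Here N1 = 2p, N2 = 4p − 1, h = 2N1 − N2 = 1, k = 2p and g = 1 satisfy every hypothesis of the main subtree lemma except g + h > 2, showing that condition is tight.) -/
/-- Tightness of the condition `g + h > 2`: the star on `2p` vertices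
(center `none`, leaves `some i`), with center weight `1` and leaf weight `2`,
has no subtree of weight exactly `2p`. -/
theorem star_no_subtree_of_weight
    (p : ℕ) (hp : 1 < p) :
    ¬ ∃ S : Finset (Option (Fin (2 * p - 1))),
      S.Nonempty ∧
      ((SimpleGraph.fromRel
          (fun a _ : Option (Fin (2 * p - 1)) => a = none)).induce (S : Set (Option (Fin (2 * p - 1))))).Connected ∧
      ∑ v ∈ S, (if v = none then 1 else 2) = 2 * p := by
  rintro ⟨S, hne, hconn, hsum⟩
  by_cases hn : none ∈ S
  · -- sum is odd
    have : ∑ v ∈ S, (if v = none then 1 else 2) = 2 * S.card - 1 := by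
      rw [← Finset.add_sum_erase _ _ hn]
      rw [if_pos rfl]
      have h2 : ∀ v ∈ S.erase none, (if v = none then 1 else 2) = 2 := by
        intro v hv
        rw [if_neg (Finset.ne_of_mem_erase hv)]
      rw [Finset.sum_congr rfl h2, Finset.sum_const, smul_eq_mul,
        Finset.card_erase_of_mem hn]
      have hc : 1 ≤ S.card := Finset.card_pos.mpr hne
      omega
    rw [this] at hsum
    have hc : 1 ≤ S.card := Finset.card_pos.mpr hne
    omega
  · -- all vertices are leaves; induced graph has no edges
    have hsub : Subsingleton (S : Set (Option (Fin (2 * p - 1)))) := by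
      have hbot : ((SimpleGraph.fromRel
          (fun a _ : Option (Fin (2 * p - 1)) => a = none)).induce
          (S : Set (Option (Fin (2 * p - 1))))) = ⊥ := by
        ext ⟨a, ha⟩ ⟨b, hb⟩
        simp only [SimpleGraph.comap_adj, SimpleGraph.fromRel_adj, SimpleGraph.bot_adj, iff_false]
        rintro ⟨-, h | h⟩
        · exact hn (h ▸ ha)
        · exact hn (h ▸ hb)
      rw [hbot] at hconn
      exact SimpleGraph.preconnected_bot_iff_subsingleton.mp hconn.preconnected
    have hcard : S.card = 1 := by
      have := hne
      obtain ⟨a, ha⟩ := this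
      refine Finset.card_eq_one.mpr ⟨a, ?_⟩
      ext b
      simp only [Finset.mem_singleton]
      constructor
      · intro hb
        have := hsub.allEq ⟨b, hb⟩ ⟨a, ha⟩
        exact Subtype.mk_eq_mk.mp this
      · rintro rfl; exact ha
    obtain ⟨a, ha⟩ := Finset.card_eq_one.mp hcard
    subst ha
    simp only [Finset.sum_singleton] at hsum
    have : a ≠ none := by rintro rfl; exact hn (Finset.mem_singleton_self none)
    rw [if_neg this] at hsum
    omega
end

section
/- Let p > 1 be an integer and let T be the path v_1 v_2 … v_{2p+3} on 2p + 3 vertices. Assign vertex weights c by c(v_{p+2}) = p + 2, c(v_{p+1}) = c(v_{p+3}) = 2, and c(v_j) = 1 for all other j. Then T has no subtree of weight exactly p + 3; equivalently, no set of consecutive vertices v_i, v_{i+1}, …, v_j has total weight p + 3. (Here N1 = 2p + 3, N2 = 3p + 6, h = 2N1 − N2 = p, k = p + 3 and g = 1 satisfy every hypothesis of the main subtree lemma except N2 ≤ 2k + g + h − 2, since N2 = 2k + g + h − 1; this shows the upper bound on N2 is tight.) -/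
lemma walk_covers {n : ℕ} {S : Set (Fin n)} {x y : S}
    (w : ((SimpleGraph.fromRel (fun i j : Fin n => (i : ℕ) + 1 = (j : ℕ))).induce S).Walk x y) :
    ∀ m : ℕ, ((x : Fin n).1 ≤ m ∧ m ≤ (y : Fin n).1) ∨ ((y : Fin n).1 ≤ m ∧ m ≤ (x : Fin n).1) →
      ∃ v ∈ S, (v : Fin n).1 = m := by
  induction w with
  | @nil u => rintro m (⟨h1, h2⟩ | ⟨h1, h2⟩) <;> exact ⟨_, u.2, by omega⟩
  | @cons u v z h w ih =>
    intro m hm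
    simp only [SimpleGraph.comap_adj, SimpleGraph.fromRel_adj,
      Function.Embedding.coe_subtype] at h
    obtain ⟨-, hadj⟩ := h
    by_cases hm' : ((v : Fin n).1 ≤ m ∧ m ≤ (z : Fin n).1) ∨
        ((z : Fin n).1 ≤ m ∧ m ≤ (v : Fin n).1)
    · exact ih m hm'
    · refine ⟨_, u.2, ?_⟩
      push_neg at hm'
      rcases hadj with h' | h' <;> omega

/-- Tightness of the condition `N2 ≤ 2k + g + h - 2`: the path on `2p + 3`
vertices (vertex `v` adjacent to `w` iff their indices differ by one), where
the vertex `v_{p+2}` (zero-based index `p + 1`) has weight `p + 2`, the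
vertices `v_{p+1}` and `v_{p+3}` (zero-based indices `p` and `p + 2`) have
weight `2`, and all other vertices have weight `1`, has no subtree of weight
exactly `p + 3`. -/
theorem path_no_subtree_of_weight_upper
    (p : ℕ) (hp : 1 < p) :
    ¬ ∃ S : Finset (Fin (2 * p + 3)),
      S.Nonempty ∧
      ((SimpleGraph.fromRel
          (fun i j : Fin (2 * p + 3) => (i : ℕ) + 1 = (j : ℕ))).induce
            (S : Set (Fin (2 * p + 3)))).Connected ∧
      ∑ v ∈ S, (if (v : ℕ) = p + 1 then p + 2
                else if (v : ℕ) = p ∨ (v : ℕ) = p + 2 then 2 else 1) = p + 3 := by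
  rintro ⟨S, hne, hconn, hsum⟩
  set a : Fin (2 * p + 3) := S.min' hne with ha
  set b : Fin (2 * p + 3) := S.max' hne with hb
  have haS : a ∈ S := S.min'_mem hne
  have hbS : b ∈ S := S.max'_mem hne
  obtain ⟨w⟩ := hconn.preconnected ⟨a, haS⟩ ⟨b, hbS⟩
  have himg : S.image Fin.val = Finset.Icc a.1 b.1 := by
    ext m
    simp only [Finset.mem_image, Finset.mem_Icc]
    constructor
    · rintro ⟨v, hv, rfl⟩
      exact ⟨S.min'_le v hv, S.le_max' v hv⟩
    · intro hm
      obtain ⟨v, hv, hv'⟩ := walk_covers w m (Or.inl hm)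
      exact ⟨v, hv, hv'⟩
  have hsum' : ∑ m ∈ Finset.Icc a.1 b.1,
      (if m = p + 1 then p + 2 else if m = p ∨ m = p + 2 then 2 else 1) = p + 3 := by
    rw [← himg, Finset.sum_image (fun x _ y _ h => Fin.val_injective h)]
    exact hsum
  have hrw : ∑ m ∈ Finset.Icc a.1 b.1,
      (if m = p + 1 then p + 2 else if m = p ∨ m = p + 2 then 2 else 1)
      = ∑ m ∈ Finset.Icc a.1 b.1,
      (1 + ((if m = p + 1 then p + 1 else 0) + ((if m = p then 1 else 0)
        + (if m = p + 2 then 1 else 0)))) := by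
    refine Finset.sum_congr rfl fun m _ => ?_
    split_ifs <;> omega
  rw [hrw] at hsum'
  simp only [Finset.sum_add_distrib, Finset.sum_const, smul_eq_mul, mul_one,
    Finset.sum_ite_eq' (Finset.Icc a.1 b.1), Nat.card_Icc, Finset.mem_Icc] at hsum'
  have hab : a.1 ≤ b.1 := S.min'_le b hbS
  have hb2 : b.1 < 2 * p + 3 := b.isLt
  -- case analysis
  split_ifs at hsum' <;> omega
end

section
/- Let n ≥ 3 be a natural number and let G be the square of the cycle of length n: the simple graph on the vertex set ℤ/nℤ in which distinct vertices i and j are adjacent if and only if i − j ∈ {1, −1, 2, −2} (mod n). Then G is pancyclic: for every natural number ℓ with 3 ≤ ℓ ≤ n, G contains a cycle of length ℓ. -/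
/-- From a function `f : ℕ → V` with consecutive values adjacent, build a walk
from `f 0` to `f m` of length `m`, with explicit support and edge lists. -/
private lemma walk_of_fn {V : Type*} (G : SimpleGraph V) :
    ∀ (m : ℕ) (f : ℕ → V), (∀ i, i < m → G.Adj (f i) (f (i+1))) →
    ∃ w : G.Walk (f 0) (f m),
      w.length = m ∧ w.support = (List.range (m+1)).map f ∧
      w.edges = (List.range m).map (fun i => s(f i, f (i+1))) := by
  intro m
  induction m with
  | zero => intro f _; exact ⟨.nil, rfl, by simp [List.range_succ], by simp⟩
  | succ m ih =>
    intro f h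
    obtain ⟨w, hlen, hsup, hed⟩ := ih (fun i => f (i+1)) (fun i hi => h (i+1) (by omega))
    refine ⟨.cons (h 0 (by omega)) w, by simp [hlen], ?_, ?_⟩
    · rw [SimpleGraph.Walk.support_cons, hsup, List.range_succ_eq_map (n := m+1)]
      simp [List.map_map, Function.comp]
    · rw [SimpleGraph.Walk.edges_cons, hed, List.range_succ_eq_map (n := m)]
      simp [List.map_map, Function.comp]

/-- The square of a cycle of length `n ≥ 3` (the graph on `ZMod n` with `i`
adjacent to `j` iff `i ≠ j` and `i - j ≡ ±1, ±2 (mod n)`) is pancyclic: it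
contains a cycle of every length `ℓ` with `3 ≤ ℓ ≤ n`. -/
theorem square_of_cycle_pancyclic
    (n : ℕ) (hn : 3 ≤ n) (ℓ : ℕ) (hℓ3 : 3 ≤ ℓ) (hℓn : ℓ ≤ n) :
    ∃ (v : ZMod n)
      (w : (SimpleGraph.fromRel
        (fun i j : ZMod n => i - j = 1 ∨ i - j = 2)).Walk v v),
      w.IsCycle ∧ w.length = ℓ := by
  haveI : NeZero n := ⟨by omega⟩
  set G : SimpleGraph (ZMod n) :=
    SimpleGraph.fromRel (fun i j : ZMod n => i - j = 1 ∨ i - j = 2) with hG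
  -- the vertex at position `i` along the cycle, as a natural number
  set F : ℕ → ℕ := fun i => if 2*i < ℓ then 2*i else 2*(ℓ-i) - 1 with hF
  have hFlt : ∀ i, i ≤ ℓ → F i < n := by
    intro i hi; simp only [hF]; split_ifs <;> omega
  have hinj : ∀ i j, i < ℓ → j < ℓ → F i = F j → i = j := by
    intro i j hi hj; simp only [hF]; split_ifs <;> omega
  have hF0 : F 0 = 0 := by simp only [hF]; split_ifs <;> omega
  have hFl : F ℓ = 0 := by simp only [hF]; split_ifs <;> omega
  set f : ℕ → ZMod n := fun i => (F i : ZMod n) with hf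
  have hcast : ∀ i j, i ≤ ℓ → j ≤ ℓ → f i = f j → F i = F j := by
    intro i j hi hj h
    have h1 := ZMod.val_cast_of_lt (hFlt i hi)
    have h2 := ZMod.val_cast_of_lt (hFlt j hj)
    rw [← h1, ← h2]
    exact congrArg ZMod.val h
  -- injectivity of f on positions 1..ℓ (f ℓ = f 0 = 0 but 0 < positions)
  have hinj' : ∀ i j, 0 < i → i ≤ ℓ → 0 < j → j ≤ ℓ → f i = f j → i = j := by
    intro i j hi0 hi hj0 hj h
    have hFij := hcast i j hi hj h
    rcases eq_or_lt_of_le hi with hiℓ | hiℓ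
    · rcases eq_or_lt_of_le hj with hjℓ | hjℓ
      · omega
      · exfalso
        have : F j = F 0 := by rw [← hFij, hiℓ, hFl, hF0]
        have := hinj j 0 hjℓ (by omega) this
        omega
    · rcases eq_or_lt_of_le hj with hjℓ | hjℓ
      · exfalso
        have : F i = F 0 := by rw [hFij, hjℓ, hFl, hF0]
        have := hinj i 0 hiℓ (by omega) this
        omega
      · exact hinj i j hiℓ hjℓ hFij
  have hstep : ∀ i, i < ℓ →
      (F i = F (i+1) + 1 ∨ F i = F (i+1) + 2 ∨
        F (i+1) = F i + 1 ∨ F (i+1) = F i + 2) := by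
    intro i hi; simp only [hF]; split_ifs <;> omega
  have hne : ∀ i j, i ≤ ℓ → j ≤ ℓ → F i ≠ F j → f i ≠ f j := by
    intro i j hi hj hFne h
    exact hFne (hcast i j hi hj h)
  have hadj : ∀ i, i < ℓ → G.Adj (f i) (f (i+1)) := by
    intro i hi
    rw [hG, SimpleGraph.fromRel_adj]
    constructor
    · intro h
      by_cases h1 : i = 0
      · -- f 0 = f 1 : F 1 ≠ 0
        subst h1
        have : F 1 = F 0 := hcast 1 0 (by omega) (by omega) h.symm
        have := hinj 1 0 (by omega) (by omega) this
        omega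
      · have := hinj' i (i+1) (by omega) (by omega) (by omega) (by omega) h
        omega
    · rcases hstep i hi with h | h | h | h
      · left; left
        show (F i : ZMod n) - (F (i+1) : ZMod n) = 1
        rw [h]; push_cast; ring
      · left; right
        show (F i : ZMod n) - (F (i+1) : ZMod n) = 2
        rw [h]; push_cast; ring
      · right; left
        show (F (i+1) : ZMod n) - (F i : ZMod n) = 1
        rw [h]; push_cast; ring
      · right; right
        show (F (i+1) : ZMod n) - (F i : ZMod n) = 2
        rw [h]; push_cast; ring
  obtain ⟨w, hlen, hsup, hed⟩ := walk_of_fn G ℓ f hadj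
  have heq : f ℓ = f 0 := by show (F ℓ : ZMod n) = (F 0 : ZMod n); rw [hFl, hF0]
  refine ⟨f 0, w.copy rfl heq, ?_, by rw [SimpleGraph.Walk.length_copy]; exact hlen⟩
  rw [SimpleGraph.Walk.isCycle_def]
  refine ⟨?_, ?_, ?_⟩
  · -- trail: edges are nodup
    rw [SimpleGraph.Walk.isTrail_def, SimpleGraph.Walk.edges_copy, hed]
    refine List.Nodup.map_on ?_ (List.nodup_range (n := ℓ))
    intro i hi j hj h
    rw [List.mem_range] at hi hj
    rw [Sym2.eq_iff] at h
    rcases h with ⟨h1, _⟩ | ⟨h1, h2⟩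
    · exact hinj i j hi hj (hcast i j (by omega) (by omega) h1)
    · -- f i = f (j+1), f (i+1) = f j
      exfalso
      by_cases hi0 : i = 0
      · subst hi0
        -- f 0 = f (j+1) → F (j+1) = 0 → j+1 = ℓ
        have hj1 : F (j+1) = F ℓ := by
          rw [hFl, ← hF0]
          exact (hcast 0 (j+1) (by omega) (by omega) h1).symm
        have hj1ℓ : j + 1 = ℓ := by
          by_contra hc
          have : F (j+1) = F 0 := by rw [hj1, hFl, hF0]
          have := hinj (j+1) 0 (by omega) (by omega) this
          omega
        -- f 1 = f j → j = 1 → ℓ = 2, contradiction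
        have : j = 0 + 1 := (hinj' (0+1) j (by omega) (by omega) (by omega) (by omega) h2).symm
        omega
      · have : i = j + 1 := hinj' i (j+1) (by omega) (by omega) (by omega) (by omega) h1
        by_cases hj0 : j = 0
        · subst hj0
          -- f (i+1) = f 0 → i + 1 = ℓ, but i = 1 so ℓ = 2
          have hi1 : F (i+1) = F ℓ := by
            rw [hFl, ← hF0]
            exact hcast (i+1) 0 (by omega) (by omega) h2
          have : i + 1 = ℓ := by
            by_contra hc
            have : F (i+1) = F 0 := by rw [hi1, hFl, hF0]
            have := hinj (i+1) 0 (by omega) (by omega) this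
            omega
          omega
        · have := hinj' (i+1) j (by omega) (by omega) (by omega) (by omega) h2
          omega
  · -- not nil
    intro h
    have : (w.copy rfl heq).length = 0 := by rw [h]; rfl
    rw [SimpleGraph.Walk.length_copy, hlen] at this
    omega
  · -- support tail nodup
    rw [SimpleGraph.Walk.support_copy, hsup, List.range_succ_eq_map (n := ℓ), List.map_cons,
      List.tail_cons, List.map_map]
    refine List.Nodup.map_on ?_ (List.nodup_range (n := ℓ))
    intro i hi j hj h
    rw [List.mem_range] at hi hj
    have := hinj' (i+1) (j+1) (by omega) (by omega) (by omega) (by omega) h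
    omega
end
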